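/- arXiv:2409.06834 — 2 statements merged into one kernel-verified Lean document; each statement's English description precedes it below -/
import Mathlib

section
/- Let (Ω, F, P) be a probability space, let m, ρ ∈ ℕ with 1 ≤ ρ ≤ m + 1, and let V : Ω → ℝ be a measurable random variable with 0 ≤ V ≤ 1 almost surely. Suppose that for every ε ∈ (0,1), P[V > ε] ≤ min{1, Σ_{j=0}^{ρ−1} C(m,j)·ε^j·(1−ε)^{m−j}}. Then E[V] ≤ ρ/(m+1). -/
/-! By the layer-cake formula, `E[V] = ∫₀¹ P[V > ε] dε` since `0 ≤ V ≤ 1`, so the tail bound gives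
`E[V] ≤ ∫₀¹ B_{ρ,m}(ε) dε`. Each summand of `B_{ρ,m}` is a Bernstein basis polynomial, whose integral
is the Beta value `C(m,j) · j! (m-j)! / (m+1)! = 1/(m+1)`; summing `ρ` of them gives `ρ/(m+1)`. -/

open MeasureTheory Set
open scoped Nat

theorem integral_pow_mul_one_sub_pow (j n : ℕ) :
    ∫ x in (0 : ℝ)..1, x ^ j * (1 - x) ^ n = (j ! * n ! : ℝ) / (j + n + 1)! := by
  have hbeta : Complex.betaIntegral (j + 1) (n + 1)
      = ((∫ x in (0 : ℝ)..1, x ^ j * (1 - x) ^ n : ℝ) : ℂ) := by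
    rw [Complex.betaIntegral, ← intervalIntegral.integral_ofReal]
    refine intervalIntegral.integral_congr fun x _ => ?_
    push_cast
    simp only [add_sub_cancel_right, Complex.cpow_natCast]
  have hgamma := Complex.betaIntegral_eq_Gamma_mul_div (j + 1) (n + 1)
    (by simp; positivity) (by simp; positivity)
  rw [hbeta, show (j + 1 + (n + 1) : ℂ) = ((j + n + 1 : ℕ) : ℂ) + 1 by push_cast; ring,
    Complex.Gamma_nat_eq_factorial, Complex.Gamma_nat_eq_factorial,
    Complex.Gamma_nat_eq_factorial] at hgamma
  exact Complex.ofReal_injective (by rw [hgamma]; push_cast; rfl)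

theorem integral_bernstein_basis {m j : ℕ} (hj : j ≤ m) :
    ∫ x in (0 : ℝ)..1, (m.choose j : ℝ) * x ^ j * (1 - x) ^ (m - j) = 1 / (m + 1) := by
  simp only [mul_assoc, intervalIntegral.integral_const_mul, integral_pow_mul_one_sub_pow,
    Nat.add_sub_cancel' hj, Nat.cast_choose ℝ hj, Nat.factorial_succ]
  have := m.factorial_pos
  have := j.factorial_pos
  have := (m - j).factorial_pos
  field_simp
  push_cast
  ring

noncomputable def binomialTail (m ρ : ℕ) (ε : ℝ) : ℝ :=
  ∑ j ∈ Finset.range ρ, (m.choose j : ℝ) * ε ^ j * (1 - ε) ^ (m - j)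

theorem binomialTail_nonneg (m ρ : ℕ) {ε : ℝ} (h0 : 0 ≤ ε) (h1 : ε ≤ 1) :
    0 ≤ binomialTail m ρ ε :=
  Finset.sum_nonneg fun _ _ => mul_nonneg (by positivity) (pow_nonneg (sub_nonneg.2 h1) _)

theorem continuous_binomialTail (m ρ : ℕ) : Continuous (binomialTail m ρ) := by
  unfold binomialTail; fun_prop

theorem integral_binomialTail {m ρ : ℕ} (hρ : ρ ≤ m + 1) :
    ∫ ε in (0 : ℝ)..1, binomialTail m ρ ε = ρ / (m + 1) := by
  unfold binomialTail
  rw [intervalIntegral.integral_finsetSum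
      fun j _ => (by fun_prop : Continuous _).intervalIntegrable _ _,
    Finset.sum_congr rfl fun j hj => integral_bernstein_basis (by grind)]
  simp [div_eq_mul_inv]

theorem integral_le_of_measureReal_gt_le {Ω : Type*} [MeasurableSpace Ω] {μ : Measure Ω}
    [IsFiniteMeasure μ] {V : Ω → ℝ} {c : ℝ} {g : ℝ → ℝ} (hc : 0 ≤ c) (hV : AEMeasurable V μ)
    (hV0 : 0 ≤ᵐ[μ] V) (hVc : ∀ᵐ ω ∂μ, V ω ≤ c) (hg : IntervalIntegrable g volume 0 c)
    (htail : ∀ t ∈ Ioo 0 c, μ.real {ω | t < V ω} ≤ g t) :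
    ∫ ω, V ω ∂μ ≤ ∫ t in 0..c, g t := by
  have hVint : Integrable V μ :=
    .of_mem_Icc 0 c hV (by filter_upwards [hV0, hVc] with ω h0 h1 using ⟨h0, h1⟩)
  have hvanish : ∀ t ∈ Ioi 0 \ Ioo 0 c, μ.real {ω | t < V ω} = 0 := by
    intro t ⟨ht0, htc⟩
    have hct : c ≤ t := not_lt.1 fun h => htc ⟨ht0, h⟩
    rw [measureReal_eq_zero_iff, measure_eq_zero_iff_ae_notMem]
    filter_upwards [hVc] with ω hω using not_lt.2 (hω.trans hct)
  have hanti : Antitone fun t => μ {ω | t < V ω} :=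
    fun _ _ hst => measure_mono fun _ h => hst.trans_lt h
  have hmeas : Measurable fun t => μ.real {ω | t < V ω} := hanti.measurable.ennreal_toReal
  have htail_int : IntegrableOn (fun t => μ.real {ω | t < V ω}) (Ioo 0 c) :=
    Measure.integrableOn_of_bounded (M := μ.real univ) (by simp) hmeas.aestronglyMeasurable
      (.of_forall fun t => by
        rw [Real.norm_of_nonneg measureReal_nonneg]; exact measureReal_mono (subset_univ _))
  rw [hVint.integral_eq_integral_meas_lt hV0, intervalIntegral.integral_of_le hc,
    integral_Ioc_eq_integral_Ioo,
    setIntegral_eq_of_subset_of_forall_sdiff_eq_zero measurableSet_Ioi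
      Ioo_subset_Ioi_self hvanish]
  exact setIntegral_mono_on htail_int (hg.1.mono_set Ioo_subset_Ioc_self) measurableSet_Ioo htail

theorem stmt_4_general {Ω : Type*} [MeasurableSpace Ω] (μ : Measure Ω) [IsProbabilityMeasure μ]
    (m ρ : ℕ) (hρm : ρ ≤ m + 1)
    (V : Ω → ℝ) (hV : Measurable V)
    (hV0 : ∀ᵐ ω ∂μ, 0 ≤ V ω) (hV1 : ∀ᵐ ω ∂μ, V ω ≤ 1)
    (htail : ∀ ε : ℝ, 0 < ε → ε < 1 →
      μ {ω | ε < V ω} ≤ ENNReal.ofReal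
        (min 1 (∑ j ∈ Finset.range ρ, (m.choose j : ℝ) * ε ^ j * (1 - ε) ^ (m - j)))) :
    ∫ ω, V ω ∂μ ≤ (ρ : ℝ) / (m + 1) := by
  have htail_real : ∀ ε ∈ Ioo (0 : ℝ) 1, μ.real {ω | ε < V ω} ≤ binomialTail m ρ ε :=
    fun ε ⟨h0, h1⟩ => (ENNReal.toReal_le_of_le_ofReal
      (le_min zero_le_one (binomialTail_nonneg m ρ h0.le h1.le)) (htail ε h0 h1)).trans
      (min_le_right _ _)
  calc ∫ ω, V ω ∂μ ≤ ∫ ε in (0 : ℝ)..1, binomialTail m ρ ε :=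
        integral_le_of_measureReal_gt_le zero_le_one hV.aemeasurable hV0 hV1
          ((continuous_binomialTail m ρ).intervalIntegrable _ _) htail_real
    _ = ρ / (m + 1) := integral_binomialTail hρm

theorem stmt_4 {Ω : Type*} [MeasurableSpace Ω] (μ : Measure Ω) [IsProbabilityMeasure μ]
    (m ρ : ℕ) (hρ1 : 1 ≤ ρ) (hρm : ρ ≤ m + 1)
    (V : Ω → ℝ) (hV : Measurable V)
    (hV0 : ∀ᵐ ω ∂μ, 0 ≤ V ω) (hV1 : ∀ᵐ ω ∂μ, V ω ≤ 1)
    (htail : ∀ ε : ℝ, 0 < ε → ε < 1 →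
      μ {ω | ε < V ω} ≤ ENNReal.ofReal
        (min 1 (∑ j ∈ Finset.range ρ, (m.choose j : ℝ) * ε ^ j * (1 - ε) ^ (m - j)))) :
    ∫ ω, V ω ∂μ ≤ (ρ : ℝ) / (m + 1) :=
  stmt_4_general μ m ρ hρm V hV hV0 hV1 htail
end

section
/- Let μ be the standard Gaussian measure on ℝ (mean 0, variance 1), let σ ∈ (0,1), and let x, u ∈ ℝ satisfy 10 − x² ≥ 0 and 10 − (x + 2 + u)² − σ² ≥ (1 − σ²)·(10 − x²). Then μ{ t ∈ ℝ : 10 − (x + 2 + u + σ·t)² < 0 } ≤ 1 − ((10 − x²)/10)·(1 − σ²). -/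
/-!
With `y = x + 2 + u`, the exit event is `{t | 10 < (y + σ t)²}` and `y + σ t` is distributed as
`N(y, σ²)`. Markov's inequality for its square bounds the exit probability by `(y² + σ²) / 10`,
and the tightened CBF constraint says exactly that `y² + σ² ≤ 10 - (1 - σ²) h(x)`.
-/

open MeasureTheory ProbabilityTheory

theorem measure_ge_le_ofReal_integral_div {Ω : Type*} [MeasurableSpace Ω] {μ : Measure Ω}
    [IsFiniteMeasure μ] {f : Ω → ℝ} (hf_nonneg : 0 ≤ᵐ[μ] f) (hf_int : Integrable f μ)
    {c : ℝ} (hc : 0 < c) :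
    μ {ω | c ≤ f ω} ≤ ENNReal.ofReal ((∫ ω, f ω ∂μ) / c) := by
  rw [← ofReal_measureReal]
  exact ENNReal.ofReal_le_ofReal <|
    (le_div_iff₀' hc).2 (mul_meas_ge_le_integral_of_nonneg hf_nonneg hf_int c)

lemma integral_sq_gaussianReal (m : ℝ) (v : NNReal) :
    ∫ x, x ^ 2 ∂gaussianReal m v = m ^ 2 + v := by
  have h := variance_eq_sub (memLp_id_gaussianReal (μ := m) (v := v) 2)
  simp only [variance_id_gaussianReal, Pi.pow_apply, id_eq, integral_id_gaussianReal] at h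
  linarith

lemma gaussianReal_map_const_add_mul (a b : ℝ) {v : NNReal} (hv : (v : ℝ) = b ^ 2) :
    (gaussianReal 0 1).map (fun t ↦ a + b * t) = gaussianReal a v := by
  have h : (fun t : ℝ ↦ a + b * t) = (a + ·) ∘ (b * ·) := rfl
  rw [h, ← Measure.map_map (by fun_prop) (by fun_prop), gaussianReal_map_const_mul,
    gaussianReal_map_const_add]
  congr 1
  · ring
  · ext; simp [hv]

theorem stmt_16_general (σ : ℝ) (x u : ℝ)
    (htight : 10 - (x + 2 + u) ^ 2 - σ ^ 2 ≥ (1 - σ ^ 2) * (10 - x ^ 2)) :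
    gaussianReal 0 1 {t : ℝ | 10 - (x + 2 + u + σ * t) ^ 2 < 0}
      ≤ ENNReal.ofReal (1 - ((10 - x ^ 2) / 10) * (1 - σ ^ 2)) := by
  set y := x + 2 + u
  obtain ⟨v, hv⟩ : ∃ v : NNReal, (v : ℝ) = σ ^ 2 := ⟨⟨σ ^ 2, sq_nonneg σ⟩, rfl⟩
  have hexit : {t : ℝ | 10 - (y + σ * t) ^ 2 < 0} = (y + σ * ·) ⁻¹' {s | 10 < s ^ 2} := by
    ext t; simp
  calc gaussianReal 0 1 {t : ℝ | 10 - (y + σ * t) ^ 2 < 0}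
      = gaussianReal y v {s | 10 < s ^ 2} := by
        rw [hexit, ← Measure.map_apply (by fun_prop) (by measurability),
          gaussianReal_map_const_add_mul y σ hv]
    _ ≤ gaussianReal y v {s | 10 ≤ s ^ 2} :=
        measure_mono <| Set.ofPred_subset_ofPred.2 fun _ ↦ le_of_lt
    _ ≤ ENNReal.ofReal ((∫ s, s ^ 2 ∂gaussianReal y v) / 10) :=
        measure_ge_le_ofReal_integral_div (ae_of_all _ sq_nonneg)
          (memLp_id_gaussianReal 2).integrable_sq (by norm_num)
    _ ≤ ENNReal.ofReal (1 - ((10 - x ^ 2) / 10) * (1 - σ ^ 2)) := by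
        rw [integral_sq_gaussianReal, hv]
        exact ENNReal.ofReal_le_ofReal (by linarith)

theorem stmt_16 (σ : ℝ) (hσ0 : 0 < σ) (hσ1 : σ < 1) (x u : ℝ)
    (hsafe : 10 - x ^ 2 ≥ 0)
    (htight : 10 - (x + 2 + u) ^ 2 - σ ^ 2 ≥ (1 - σ ^ 2) * (10 - x ^ 2)) :
    gaussianReal 0 1 {t : ℝ | 10 - (x + 2 + u + σ * t) ^ 2 < 0}
      ≤ ENNReal.ofReal (1 - ((10 - x ^ 2) / 10) * (1 - σ ^ 2)) :=
  stmt_16_general σ x u htight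
end
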